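/- arXiv:1304.7235 — 4 statements merged into one kernel-verified Lean document; each statement's English description precedes it below -/
import Mathlib

section
/- Let z₁, …, zₙ ∈ ℝⁿ be linearly independent vectors and let M = ([N(z₁), …, N(zₙ)]ᵀ)⁻¹ be the inverse of the matrix whose rows are the normalized vectors N(z₁)ᵀ, …, N(zₙ)ᵀ, and let m₁, …, mₙ denote the columns of M. Then δ(z₁, …, zₙ) = 1 / max_{k∈{1,…,n}} ‖m_k‖, where ‖·‖ is the Euclidean norm. -/
open scoped RealInnerProductSpace BigOperators
open MeasureTheory ProbabilityTheory

noncomputable section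

/-- Identity map from plain vectors to Euclidean space (L2 norm). -/
def toE {n : ℕ} (x : Fin n → ℝ) : EuclideanSpace ℝ (Fin n) := WithLp.toLp 2 x

/-- Identity map from Euclidean space to plain vectors. -/
def ofE {n : ℕ} (x : EuclideanSpace ℝ (Fin n)) : Fin n → ℝ := x

/-- Normalization N(x) = x / ‖x‖. -/
def nrm {n : ℕ} (x : EuclideanSpace ℝ (Fin n)) : EuclideanSpace ℝ (Fin n) := ‖x‖⁻¹ • x

/-- δ̂(S, v): the norm of the projection of v onto the orthogonal complement of span S,
divided by ‖v‖ (the sine of the angle between v and span S). -/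
def deltaHat {n : ℕ} (S : Set (EuclideanSpace ℝ (Fin n))) (v : EuclideanSpace ℝ (Fin n)) : ℝ :=
  ‖(Submodule.orthogonalProjectionOnto ((Submodule.span ℝ S)ᗮ) v : EuclideanSpace ℝ (Fin n))‖ / ‖v‖

/-- δ(z₁, …, zₙ) = min over k of δ̂({z_i : i ≠ k}, z_k). -/
def deltaVec {n : ℕ} (z : Fin n → EuclideanSpace ℝ (Fin n)) : ℝ :=
  ⨅ k : Fin n, deltaHat (z '' {i | i ≠ k}) (z k)

/-- δ(A) for rows a₁, …, a_m: the minimum of δ over all choices of n linearly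
independent rows. -/
def deltaRows {m n : ℕ} (a : Fin m → EuclideanSpace ℝ (Fin n)) : ℝ :=
  sInf { d | ∃ f : Fin n → Fin m, LinearIndependent ℝ (a ∘ f) ∧ d = deltaVec (a ∘ f) }

/-- A vertex of the polyhedron {x : ∀ i, ⟪a i, x⟫ ≤ b i}. -/
def IsVertex {m n : ℕ} (a : Fin m → EuclideanSpace ℝ (Fin n)) (b : Fin m → ℝ)
    (z : EuclideanSpace ℝ (Fin n)) : Prop :=
  (∀ i, ⟪a i, z⟫ ≤ b i) ∧ Submodule.span ℝ (a '' {i | ⟪a i, z⟫ = b i}) = ⊤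

/-- Two distinct vertices are neighboring if n−1 linearly independent constraints are
tight at both. -/
def Neighboring {m n : ℕ} (a : Fin m → EuclideanSpace ℝ (Fin n)) (b : Fin m → ℝ)
    (z₁ z₂ : EuclideanSpace ℝ (Fin n)) : Prop :=
  IsVertex a b z₁ ∧ IsVertex a b z₂ ∧ z₁ ≠ z₂ ∧
    ∃ s : Finset (Fin m), s.card = n - 1 ∧
      LinearIndependent ℝ (fun i : s => a i) ∧
      ∀ i ∈ s, ⟪a i, z₁⟫ = b i ∧ ⟪a i, z₂⟫ = b i

/-- The largest absolute value of a sub-determinant of size k. -/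
def subdetSup {m n : ℕ} (A : Matrix (Fin m) (Fin n) ℝ) (k : ℕ) : ℝ :=
  ⨆ (f : Fin k → Fin m) (_ : Function.Injective f) (g : Fin k → Fin n)
    (_ : Function.Injective g), |(A.submatrix f g).det|

end

/-!
The columns `m_k` of `M` are biorthogonal to the normalized vectors: `⟪N(z_j), m_k⟫ = δ_jk`.
As the `z_i` span `ℝⁿ`, the orthogonal complement of `span {z_i : i ≠ k}` is the line `ℝ m_k`,
and the projection of `z_k` onto it has length `⟪z_k, m_k⟫ / ‖m_k‖ = ‖z_k‖ / ‖m_k‖`.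
Hence `δ̂({z_i : i ≠ k}, z_k) = 1 / ‖m_k‖`, and the minimum over `k` is `1 / max_k ‖m_k‖`.
-/

open Submodule Set

section

variable {E : Type*} [NormedAddCommGroup E] [InnerProductSpace ℝ E]

theorem orthogonal_span_image_ne_eq_span_singleton {ι : Type*} {a : ι → E}
    (hspan : span ℝ (range a) = ⊤) {k : ι} {m : E} (hk : ⟪a k, m⟫ = 1)
    (hne : ∀ j ≠ k, ⟪a j, m⟫ = 0) :
    (span ℝ (a '' {i | i ≠ k}))ᗮ = ℝ ∙ m := by
  refine le_antisymm (fun x hx => ?_) (isOrtho_span.2 ?_).ge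
  · have hx_ne : ∀ j ≠ k, ⟪a j, x⟫ = 0 := fun j hj =>
      inner_right_of_mem_orthogonal (subset_span (mem_image_of_mem a hj)) hx
    -- `x - ⟪a k, x⟫ • m` is orthogonal to every `a j`, hence to the whole space
    have hortho : (span ℝ (range a)).IsOrtho (ℝ ∙ (x - ⟪a k, x⟫ • m)) := by
      refine isOrtho_span.2 ?_
      rintro _ ⟨j, rfl⟩ _ rfl
      by_cases hj : j = k
      · subst hj; simp [inner_sub_right, inner_smul_right, hk]
      · simp [inner_sub_right, inner_smul_right, hx_ne j hj, hne j hj]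
    rw [hspan, isOrtho_top_left, span_singleton_eq_bot, sub_eq_zero] at hortho
    exact mem_span_singleton.2 ⟨_, hortho.symm⟩
  · rintro _ ⟨j, hj, rfl⟩ _ rfl
    exact hne j hj

theorem norm_starProjection_span_singleton (m v : E) :
    ‖(ℝ ∙ m).starProjection v‖ = |⟪m, v⟫| / ‖m‖ := by
  rw [starProjection_singleton, norm_smul, Real.norm_eq_abs,
    abs_div]
  rcases eq_or_ne ‖m‖ 0 with h | h
  · simp [h]
  · simp only [RCLike.ofReal_real_eq_id, id, abs_pow, abs_norm]
    field_simp

end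

theorem deltaHat_eq_inv_norm_mul_norm {n : ℕ} {ι : Type*} {a : ι → EuclideanSpace ℝ (Fin n)}
    (hspan : span ℝ (range a) = ⊤) {k : ι} {m : EuclideanSpace ℝ (Fin n)} (hk : ⟪a k, m⟫ = 1)
    (hne : ∀ j ≠ k, ⟪a j, m⟫ = 0) :
    deltaHat (a '' {i | i ≠ k}) (a k) = (‖a k‖ * ‖m‖)⁻¹ := by
  rw [deltaHat, coe_orthogonalProjectionOnto_apply]
  simp only [orthogonal_span_image_ne_eq_span_singleton hspan hk hne]
  rw [norm_starProjection_span_singleton, real_inner_comm, hk, abs_one, div_div, one_div,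
    mul_comm]

theorem iInf_inv_eq_inv_iSup {ι : Type*} [Finite ι] {g : ι → ℝ} (hg : ∀ i, 0 < g i) :
    ⨅ i, (g i)⁻¹ = (⨆ i, g i)⁻¹ := by
  cases isEmpty_or_nonempty ι
  · simp -- both sides are `0`, by `sInf ∅ = sSup ∅ = 0` and `0⁻¹ = 0`
  obtain ⟨i₀, hi₀⟩ := Finite.exists_max g
  have hsup : ⨆ i, g i = g i₀ :=
    le_antisymm (ciSup_le hi₀) (le_ciSup (finite_range g).bddAbove i₀)
  rw [hsup]
  exact le_antisymm (ciInf_le (finite_range _).bddBelow i₀)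
    (le_ciInf fun i => inv_anti₀ (hg i) (hi₀ i))

open Matrix in
theorem inner_toE_row_toE_col_inv {n : ℕ} {A : Matrix (Fin n) (Fin n) ℝ} (hA : IsUnit A.det)
    (j k : Fin n) : ⟪toE (A j), toE (fun i => A⁻¹ i k)⟫ = (1 : Matrix (Fin n) (Fin n) ℝ) j k := by
  rw [← mul_nonsing_inv A hA, mul_apply, toE, toE, EuclideanSpace.inner_toLp_toLp, dotProduct]
  simp [mul_comm]

theorem linearIndependent_nrm {n : ℕ} {z : Fin n → EuclideanSpace ℝ (Fin n)}
    (hz : LinearIndependent ℝ z) : LinearIndependent ℝ (fun i => nrm (z i)) :=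
  hz.units_smul fun i => Units.mk0 ‖z i‖⁻¹ (inv_ne_zero (norm_ne_zero_iff.2 (hz.ne_zero i)))

theorem isUnit_det_of_linearIndependent_nrm {n : ℕ} {z : Fin n → EuclideanSpace ℝ (Fin n)}
    (hz : LinearIndependent ℝ z) : IsUnit (Matrix.of fun i j => ofE (nrm (z i)) j).det := by
  rw [← Matrix.isUnit_iff_isUnit_det, ← Matrix.linearIndependent_rows_iff_isUnit]
  exact (linearIndependent_nrm hz).map' (WithLp.linearEquiv 2 ℝ _).toLinearMap (LinearEquiv.ker _)

theorem norm_toE_col_inv_pos {n : ℕ} {A : Matrix (Fin n) (Fin n) ℝ} (hA : IsUnit A.det)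
    (k : Fin n) : 0 < ‖toE (fun i => A⁻¹ i k)‖ := by
  refine norm_pos_iff.2 fun h => one_ne_zero (α := ℝ) ?_
  rw [← Matrix.one_apply_eq k, ← inner_toE_row_toE_col_inv hA, h, inner_zero_right]

theorem deltaHat_eq_inv_norm_col_inv {n : ℕ} {z : Fin n → EuclideanSpace ℝ (Fin n)}
    (hz : LinearIndependent ℝ z) (k : Fin n) :
    deltaHat (z '' {i | i ≠ k}) (z k) =
      ‖toE (fun i => (Matrix.of fun i j => ofE (nrm (z i)) j)⁻¹ i k)‖⁻¹ := by
  set c := toE (fun i => (Matrix.of fun i j => ofE (nrm (z i)) j)⁻¹ i k)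
  have hzk : ‖z k‖ ≠ 0 := norm_ne_zero_iff.2 (hz.ne_zero k)
  have hinner (j : Fin n) : ⟪z j, c⟫ = ‖z j‖ * (1 : Matrix (Fin n) (Fin n) ℝ) j k := by
    rw [← inner_toE_row_toE_col_inv (isUnit_det_of_linearIndependent_nrm hz) j k]
    change ⟪z j, c⟫ = ‖z j‖ * ⟪‖z j‖⁻¹ • z j, c⟫
    rw [real_inner_smul_left, mul_inv_cancel_left₀ (norm_ne_zero_iff.2 (hz.ne_zero j))]
  have hspan : span ℝ (range z) = ⊤ :=
    hz.span_eq_top_of_card_eq_finrank' (by simp)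
  rw [deltaHat_eq_inv_norm_mul_norm hspan (m := ‖z k‖⁻¹ • c), norm_smul, norm_inv, norm_norm,
    mul_inv_cancel_left₀ hzk]
  · simp [inner_smul_right, hinner, hzk]
  · intro j hj
    simp [inner_smul_right, hinner, hj]

theorem stmt0_general {n : ℕ} (z : Fin n → EuclideanSpace ℝ (Fin n))
    (hz : LinearIndependent ℝ z) :
    deltaVec z =
      1 / ⨆ k : Fin n, ‖toE (fun i => (Matrix.of fun i j => ofE (nrm (z i)) j)⁻¹ i k)‖ := by
  rw [deltaVec, one_div, ← iInf_inv_eq_inv_iSup]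
  · exact iInf_congr (deltaHat_eq_inv_norm_col_inv hz)
  · exact norm_toE_col_inv_pos (isUnit_det_of_linearIndependent_nrm hz)

/-- For linearly independent z₁, …, zₙ ∈ ℝⁿ, with M the inverse of the
matrix whose rows are N(z₁)ᵀ, …, N(zₙ)ᵀ, we have
δ(z₁, …, zₙ) = 1 / max_k ‖m_k‖, where m_k are the columns of M. -/
theorem stmt0 {n : ℕ} (hn : 0 < n) (z : Fin n → EuclideanSpace ℝ (Fin n))
    (hz : LinearIndependent ℝ z) :
    deltaVec z =
      1 / ⨆ k : Fin n, ‖toE (fun i => (Matrix.of fun i j => ofE (nrm (z i)) j)⁻¹ i k)‖ :=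
  stmt0_general z hz
end

section
/- Let A ∈ ℝ^{m×n} be a matrix whose rows a₁ᵀ, …, a_mᵀ all have Euclidean norm 1 and which has n linearly independent rows, let b ∈ ℝ^m, and let P = {x ∈ ℝⁿ : Ax ≤ b}. Let y₁ and y₂ be two neighboring vertices of P and let a_iᵀ be a row of A. If a_iᵀ(y₂ − y₁) ≠ 0, then |a_iᵀ(y₂ − y₁)| ≥ δ(A) · ‖y₂ − y₁‖. -/
/-!
The `n - 1` rows tight at both vertices are linearly independent and orthogonal to
`d = y₂ - y₁`, so they span a hyperplane `H` with `Hᗮ = ℝ ∙ d`. If `⟪a i, d⟫ ≠ 0` then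
`a i ∉ H`, so `a i` together with these rows is one of the bases over which `δ(A)` is a
minimum, whence `δ(A) ≤ δ̂(H, a i) = ‖π (a i)‖`. Since `π` projects onto the line `ℝ ∙ d`,
`‖π (a i)‖ * ‖d‖ = |⟪a i, d⟫|`.
-/

open scoped RealInnerProductSpace BigOperators
open MeasureTheory ProbabilityTheory Matrix

open Module Submodule

section Hyperplane

variable {E : Type*} [NormedAddCommGroup E] [InnerProductSpace ℝ E]

lemma mem_orthogonal_span_of_forall_inner_eq_zero {S : Set E} {d : E}
    (h : ∀ v ∈ S, ⟪v, d⟫ = 0) : d ∈ (span ℝ S)ᗮ := by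
  rw [← span_singleton_le_iff_mem, ← isOrtho_iff_le, isOrtho_span]
  rintro u rfl v hv
  rw [real_inner_comm]
  exact h v hv

lemma Submodule.norm_starProjection_mul_norm_of_eq_span_singleton {U : Submodule ℝ E}
    [U.HasOrthogonalProjection] {d : E} (hU : U = ℝ ∙ d) (v : E) :
    ‖U.starProjection v‖ * ‖d‖ = |⟪v, d⟫| := by
  subst hU
  rcases eq_or_ne d 0 with rfl | hd₀
  · simp
  rw [starProjection_singleton, norm_smul, Real.norm_eq_abs, real_inner_comm]
  simp only [RCLike.ofReal_real_eq_id, id_eq, abs_div, abs_pow, abs_norm]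
  field_simp

variable [FiniteDimensional ℝ E]

lemma Submodule.orthogonal_eq_span_singleton {K : Submodule ℝ E}
    (hK : finrank ℝ K + 1 = finrank ℝ E) {d : E} (hd : d ∈ Kᗮ) (hd₀ : d ≠ 0) :
    Kᗮ = ℝ ∙ d := by
  have hperp : finrank ℝ Kᗮ = 1 := by
    have := K.finrank_add_finrank_orthogonal
    omega
  refine (eq_of_le_of_finrank_le ((span_singleton_le_iff_mem _ _).mpr hd) ?_).symm
  rw [hperp, finrank_span_singleton hd₀]

lemma Submodule.norm_starProjection_orthogonal_mul_norm {K : Submodule ℝ E}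
    (hK : finrank ℝ K + 1 = finrank ℝ E) {d : E} (hd : d ∈ Kᗮ) (v : E) :
    ‖Kᗮ.starProjection v‖ * ‖d‖ = |⟪v, d⟫| := by
  rcases eq_or_ne d 0 with rfl | hd₀
  · simp
  exact norm_starProjection_mul_norm_of_eq_span_singleton
    (K.orthogonal_eq_span_singleton hK hd hd₀) v

end Hyperplane

section Delta

variable {n : ℕ}

lemma deltaHat_nonneg (S : Set (EuclideanSpace ℝ (Fin n))) (v : EuclideanSpace ℝ (Fin n)) :
    0 ≤ deltaHat S v :=
  div_nonneg (norm_nonneg _) (norm_nonneg _)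

lemma deltaVec_le_deltaHat (z : Fin n → EuclideanSpace ℝ (Fin n)) (k : Fin n) :
    deltaVec z ≤ deltaHat (z '' {i | i ≠ k}) (z k) :=
  ciInf_le ⟨0, by rintro _ ⟨j, rfl⟩; exact deltaHat_nonneg _ _⟩ k

lemma deltaVec_cons_le (v : EuclideanSpace ℝ (Fin (n + 1)))
    (w : Fin n → EuclideanSpace ℝ (Fin (n + 1))) :
    deltaVec (Fin.cons v w : Fin (n + 1) → _) ≤ deltaHat (Set.range w) v := by
  have hne : {i : Fin (n + 1) | i ≠ 0} = Set.range Fin.succ := by rw [Fin.range_succ]; rfl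
  simpa only [hne, ← Set.range_comp, Fin.cons_comp_succ, Fin.cons_zero]
    using deltaVec_le_deltaHat (Fin.cons v w : Fin (n + 1) → _) 0

lemma deltaRows_le_deltaVec {m : ℕ} (a : Fin m → EuclideanSpace ℝ (Fin n))
    {f : Fin n → Fin m} (hf : LinearIndependent ℝ (a ∘ f)) : deltaRows a ≤ deltaVec (a ∘ f) := by
  refine csInf_le ⟨0, ?_⟩ ⟨f, hf, rfl⟩
  rintro _ ⟨f', -, rfl⟩
  exact Real.iInf_nonneg fun k => deltaHat_nonneg _ _

lemma deltaRows_le_deltaHat_of_notMem_span {m : ℕ} (a : Fin m → EuclideanSpace ℝ (Fin n))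
    {s : Finset (Fin m)} (hs : s.card + 1 = n) (hli : LinearIndependent ℝ (fun j : s => a j))
    {i : Fin m} (hi : a i ∉ span ℝ (a '' s)) : deltaRows a ≤ deltaHat (a '' s) (a i) := by
  subst hs
  set g := s.orderEmbOfFin rfl
  have hrange : Set.range (a ∘ g) = a '' s := by
    rw [Set.range_comp, s.range_orderEmbOfFin]
  have hlig : LinearIndependent ℝ (a ∘ g) :=
    hli.comp (fun j => ⟨g j, s.orderEmbOfFin_mem rfl j⟩) fun _ _ h =>
      g.injective (congrArg Subtype.val h)
  have hcons : a ∘ (Fin.cons i g : Fin (s.card + 1) → Fin m) = Fin.cons (a i) (a ∘ g) := by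
    ext1 k; cases k using Fin.cases <;> rfl
  have hlif : LinearIndependent ℝ (a ∘ (Fin.cons i g : Fin (s.card + 1) → Fin m)) := by
    rw [hcons, linearIndependent_finCons, hrange]
    exact ⟨hlig, hi⟩
  calc deltaRows a ≤ deltaVec _ := deltaRows_le_deltaVec a hlif
    _ ≤ deltaHat (Set.range (a ∘ g)) (a i) := by rw [hcons]; exact deltaVec_cons_le _ _
    _ = _ := by rw [hrange]

end Delta

theorem stmt4_general {m n : ℕ} (a : Fin m → EuclideanSpace ℝ (Fin n)) (b : Fin m → ℝ)
    (hnorm : ∀ i, ‖a i‖ = 1)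
    (y₁ y₂ : EuclideanSpace ℝ (Fin n))
    (hnb : Neighboring a b y₁ y₂)
    (i : Fin m) (hi : ⟪a i, y₂ - y₁⟫ ≠ 0) :
    deltaRows a * ‖y₂ - y₁‖ ≤ |⟪a i, y₂ - y₁⟫| := by
  obtain ⟨-, -, -, s, hcard, hli, htight⟩ := hnb
  have hd : y₂ - y₁ ∈ (span ℝ (a '' s))ᗮ := by
    refine mem_orthogonal_span_of_forall_inner_eq_zero ?_
    rintro _ ⟨j, hj, rfl⟩
    rw [inner_sub_right, (htight j hj).1, (htight j hj).2, sub_self]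
  have hn : s.card + 1 = n := by
    have : n ≠ 0 := by
      rintro rfl
      exact hi (by rw [Subsingleton.elim (y₂ - y₁) 0, inner_zero_right])
    omega
  have hrank : finrank ℝ (span ℝ (a '' s)) + 1 = finrank ℝ (EuclideanSpace ℝ (Fin n)) := by
    have himage : Set.range (fun j : s => a j) = a '' s := by ext; simp
    rw [← himage, finrank_span_eq_card hli, finrank_euclideanSpace_fin, Fintype.card_coe, hn]
  have hai : a i ∉ span ℝ (a '' s) := fun h => hi (inner_right_of_mem_orthogonal h hd)
  calc deltaRows a * ‖y₂ - y₁‖ ≤ deltaHat (a '' s) (a i) * ‖y₂ - y₁‖ := by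
        gcongr
        exact deltaRows_le_deltaHat_of_notMem_span a hn hli hai
    _ = |⟪a i, y₂ - y₁⟫| := by
        rw [deltaHat, hnorm, div_one]
        exact norm_starProjection_orthogonal_mul_norm hrank hd _

/-- Let A have unit-norm rows a₁, …, a_m and n linearly independent rows,
let y₁, y₂ be neighboring vertices of P = {x : Ax ≤ b}, and let aᵢ be a row of A.
If aᵢᵀ(y₂ − y₁) ≠ 0 then |aᵢᵀ(y₂ − y₁)| ≥ δ(A)·‖y₂ − y₁‖. -/
theorem stmt4 {m n : ℕ} (a : Fin m → EuclideanSpace ℝ (Fin n)) (b : Fin m → ℝ)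
    (hnorm : ∀ i, ‖a i‖ = 1)
    (hrank : ∃ f : Fin n → Fin m, LinearIndependent ℝ (a ∘ f))
    (y₁ y₂ : EuclideanSpace ℝ (Fin n))
    (hnb : Neighboring a b y₁ y₂)
    (i : Fin m) (hi : ⟪a i, y₂ - y₁⟫ ≠ 0) :
    deltaRows a * ‖y₂ - y₁‖ ≤ |⟪a i, y₂ - y₁⟫| :=
  stmt4_general a b hnorm y₁ y₂ hnb i hi
end

section
/- Let u₁, …, uₙ ∈ ℝⁿ be vectors, let d ∈ ℝⁿ satisfy ‖d‖ = 1, let i ∈ {1,…,n} be an index with κ := u_iᵀd ≠ 0, and let ε > 0. Let λ = (λ₁,…,λₙ) be drawn uniformly at random from (0,1]ⁿ and set w₁ = −Σ_{j=1}^n λ_j u_j. Then the probability that |w₁ᵀd| ≤ ε is at most 2ε/|κ|. -/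
open scoped RealInnerProductSpace BigOperators
open MeasureTheory ProbabilityTheory Matrix

/-! Fix every coordinate of `λ` except `λᵢ`. Then `⟪w₁, d⟫ = -(λᵢ κ + b)` for a constant `b`,
and the `λᵢ` with `|λᵢ κ + b| ≤ ε` form an interval of length `2ε/|κ|`. Since the uniform
distribution on `(0,1]` has density at most one, this bounds each fibre, and Fubini over the
remaining coordinates, a probability space, gives the same bound for the whole set. -/

open Set

theorem volume_setOf_abs_mul_add_le {a : ℝ} (ha : a ≠ 0) (b ε : ℝ) :
    volume {x : ℝ | |x * a + b| ≤ ε} ≤ ENNReal.ofReal (2 * ε / |a|) := by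
  have ha' : 0 < |a| := abs_pos.mpr ha
  have hsub : {x : ℝ | |x * a + b| ≤ ε} ⊆ Icc (-(b / a) - ε / |a|) (-(b / a) + ε / |a|) := by
    intro x hx
    have hx' : |x + b / a| ≤ ε / |a| := by
      rw [show x + b / a = (x * a + b) / a by field_simp, abs_div]
      exact div_le_div_of_nonneg_right hx ha'.le
    obtain ⟨hlo, hhi⟩ := abs_le.mp hx'
    exact ⟨by linarith, by linarith⟩
  calc volume {x : ℝ | |x * a + b| ≤ ε}
      ≤ volume (Icc (-(b / a) - ε / |a|) (-(b / a) + ε / |a|)) := measure_mono hsub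
    _ = ENNReal.ofReal (2 * ε / |a|) := by rw [Real.volume_Icc]; ring_nf

theorem measure_pi_le_of_forall_insertNth_le {m : ℕ} {α : Fin (m + 1) → Type*}
    [∀ j, MeasurableSpace (α j)] (μ : ∀ j, Measure (α j)) [∀ j, IsProbabilityMeasure (μ j)]
    (i : Fin (m + 1)) {S : Set (∀ j, α j)} (hS : MeasurableSet S) {δ : ENNReal}
    (h : ∀ y : ∀ j, α (i.succAbove j), μ i {x | Fin.insertNth i x y ∈ S} ≤ δ) :
    Measure.pi μ S ≤ δ := by
  set e := MeasurableEquiv.piFinSuccAbove α i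
  have hS' : MeasurableSet (e.symm ⁻¹' S) := e.symm.measurable hS
  calc Measure.pi μ S
      = ((μ i).prod (Measure.pi fun j => μ (i.succAbove j))) (e.symm ⁻¹' S) :=
        ((measurePreserving_piFinSuccAbove μ i).symm e).measure_preimage
          hS.nullMeasurableSet |>.symm
    _ = ∫⁻ y, μ i {x | Fin.insertNth i x y ∈ S} ∂Measure.pi fun j => μ (i.succAbove j) :=
        Measure.prod_apply_symm hS'
    _ ≤ ∫⁻ _, δ ∂Measure.pi fun j => μ (i.succAbove j) := lintegral_mono h
    _ = δ := by simp

theorem measure_pi_setOf_abs_sum_mul_le (μ : Measure ℝ) [IsProbabilityMeasure μ]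
    (hμ : μ ≤ volume) {n : ℕ} (c : Fin n → ℝ) {i : Fin n} (hc : c i ≠ 0) (ε : ℝ) :
    Measure.pi (fun _ => μ) {l : Fin n → ℝ | |∑ j, l j * c j| ≤ ε} ≤
      ENNReal.ofReal (2 * ε / |c i|) := by
  obtain ⟨m, rfl⟩ := Nat.exists_eq_succ_of_ne_zero i.pos.ne'
  have hS : MeasurableSet {l : Fin (m + 1) → ℝ | |∑ j, l j * c j| ≤ ε} :=
    measurableSet_le (by fun_prop) measurable_const
  refine measure_pi_le_of_forall_insertNth_le _ i hS fun y => ?_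
  have hfiber : {x | Fin.insertNth i x y ∈ {l : Fin (m + 1) → ℝ | |∑ j, l j * c j| ≤ ε}}
      = {x : ℝ | |x * c i + ∑ j, y j * c (i.succAbove j)| ≤ ε} := by
    simp [Fin.sum_univ_succAbove _ i]
  rw [hfiber]
  exact (hμ _).trans (volume_setOf_abs_mul_add_le hc _ ε)

theorem stmt12_general {n : ℕ} (u : Fin n → EuclideanSpace ℝ (Fin n))
    (d : EuclideanSpace ℝ (Fin n))
    (i : Fin n) (hκ : ⟪u i, d⟫ ≠ 0) (ε : ℝ) :
    Measure.pi (fun _ : Fin n => volume.restrict (Set.Ioc (0:ℝ) 1))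
        {l : Fin n → ℝ | |⟪-∑ j, l j • u j, d⟫| ≤ ε} ≤
      ENNReal.ofReal (2 * ε / |⟪u i, d⟫|) := by
  have : IsProbabilityMeasure (volume.restrict (Ioc (0 : ℝ) 1)) := ⟨by simp⟩
  have hset : {l : Fin n → ℝ | |⟪-∑ j, l j • u j, d⟫| ≤ ε}
      = {l | |∑ j, l j * ⟪u j, d⟫| ≤ ε} := by
    simp only [inner_neg_left, sum_inner, real_inner_smul_left, abs_neg]
  rw [hset]
  exact measure_pi_setOf_abs_sum_mul_le _ Measure.restrict_le_self _ hκ ε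

/-- Let u₁, …, uₙ ∈ ℝⁿ, let d ∈ ℝⁿ with ‖d‖ = 1, let i be an index with
κ := uᵢᵀd ≠ 0, and ε > 0. If λ is uniform on (0,1]ⁿ and w₁ = −Σ λⱼuⱼ, then
P[|w₁ᵀd| ≤ ε] ≤ 2ε/|κ|. -/
theorem stmt12 {n : ℕ} (u : Fin n → EuclideanSpace ℝ (Fin n))
    (d : EuclideanSpace ℝ (Fin n)) (hd : ‖d‖ = 1)
    (i : Fin n) (hκ : ⟪u i, d⟫ ≠ 0) (ε : ℝ) (hε : 0 < ε) :
    Measure.pi (fun _ : Fin n => volume.restrict (Set.Ioc (0:ℝ) 1))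
        {l : Fin n → ℝ | |⟪-∑ j, l j • u j, d⟫| ≤ ε} ≤
      ENNReal.ofReal (2 * ε / |⟪u i, d⟫|) :=
  stmt12_general u d i hκ ε
end

section
/- Let A ∈ ℝ^{m×n} be a matrix whose rows a₁ᵀ, …, a_mᵀ all have Euclidean norm 1, let b ∈ ℝ^m, and suppose the polyhedron P = {x ∈ ℝⁿ : Ax ≤ b} is non-degenerate. Let u₁, …, uₙ and v₁, …, vₙ each be n linearly independent rows of A. Let λ and μ be independent and each drawn uniformly at random from (0,1]ⁿ, and set w₁ = −Σ_{k=1}^n λ_k u_k and w₂ = Σ_{k=1}^n μ_k v_k. For ε > 0 let F_ε denote the event that there exist three pairwise distinct vertices z₁, z₂, z₃ of P such that z₁ and z₃ are neighbors of z₂ and |w₂ᵀ(z₂−z₁)/w₁ᵀ(z₂−z₁) − w₂ᵀ(z₃−z₂)/w₁ᵀ(z₃−z₂)| ≤ ε. Then the probability of F_ε tends to 0 as ε → 0⁺. -/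
open scoped RealInnerProductSpace BigOperators
open MeasureTheory ProbabilityTheory Matrix

/-!
Only finitely many triples of pairwise distinct vertices exist, and for each of them the event
`|slope(z₂ - z₁) - slope(z₃ - z₂)| ≤ ε` shrinks, as `ε → 0⁺`, to the event that the two slopes
coincide; so it suffices that this coincidence has probability zero. Three distinct vertices are
never collinear (one of them would lie strictly between the other two), hence
`d₁ = z₂ - z₁` and `d₂ = z₃ - z₂` are linearly independent. For fixed `λ` with
`⟪w₁, d₁⟫ ≠ 0 ≠ ⟪w₁, d₂⟫` (true almost surely), equal slopes means
`⟪w₂, ⟪w₁, d₂⟫ • d₁ - ⟪w₁, d₁⟫ • d₂⟫ = 0`, a hyperplane in `μ` because `μ ↦ w₂` is onto; Fubini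
concludes.
-/

open Filter Topology

theorem LinearIndependent.fintypeLinearCombination_surjective {K W ι : Type*} [Field K]
    [AddCommGroup W] [Module K W] [FiniteDimensional K W] [Fintype ι] {f : ι → W}
    (hf : LinearIndependent K f) (hcard : Fintype.card ι = Module.finrank K W) :
    Function.Surjective (Fintype.linearCombination K f) :=
  (span_range_eq_top_iff_surjective_fintypeLinearCombination _ _).1
    (hf.span_eq_top_of_card_eq_finrank' hcard)

theorem MeasureTheory.Measure.pi_restrict_absolutelyContinuous {ι : Type*} [Fintype ι]
    {α : ι → Type*} [∀ i, MeasurableSpace (α i)] (μ : ∀ i, Measure (α i))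
    [∀ i, SigmaFinite (μ i)] (s : ∀ i, Set (α i)) :
    Measure.pi (fun i => (μ i).restrict (s i)) ≪ Measure.pi μ := by
  rw [← Measure.restrict_pi_pi]
  exact Measure.absolutelyContinuous_restrict

theorem tendsto_measure_setOf_abs_le {α : Type*} [MeasurableSpace α] (μ : Measure α)
    [IsFiniteMeasure μ] {f : α → ℝ} (hf : Measurable f) (h0 : μ {x | f x = 0} = 0) :
    Tendsto (fun ε => μ {x | |f x| ≤ ε}) (𝓝[>] 0) (𝓝 0) := by
  have h := tendsto_measure_biInter_gt (μ := μ) (s := fun ε => {x | |f x| ≤ ε})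
    (fun _ _ => (measurableSet_le hf.abs measurable_const).nullMeasurableSet)
    (fun _ _ _ hij _ hx => le_trans hx hij) ⟨1, one_pos, measure_ne_top _ _⟩
  have hinter : ⋂ r > (0 : ℝ), {x | |f x| ≤ r} = {x | f x = 0} := by
    ext x
    simp only [Set.mem_iInter, Set.mem_ofPred_eq]
    refine ⟨fun h => abs_nonpos_iff.1 (le_of_forall_gt_imp_ge_of_dense h), ?_⟩
    intro hx r hr
    simpa [hx] using hr.le
  rwa [hinter, h0] at h

theorem tendsto_measure_of_subset_biUnion {α ι β : Type*} [MeasurableSpace α] {μ : Measure α}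
    {l : Filter β} (T : Finset ι) {s : β → Set α} {t : ι → β → Set α}
    (hst : ∀ x, s x ⊆ ⋃ i ∈ T, t i x) (ht : ∀ i ∈ T, Tendsto (fun x => μ (t i x)) l (𝓝 0)) :
    Tendsto (fun x => μ (s x)) l (𝓝 0) :=
  tendsto_of_tendsto_of_tendsto_of_le_of_le tendsto_const_nhds
    (by simpa using tendsto_finsetSum T ht) (fun _ => zero_le)
    fun x => (measure_mono (hst x)).trans (measure_biUnion_finset_le T _)

section EdgeSlope

variable {E : Type*} [NormedAddCommGroup E] [InnerProductSpace ℝ E]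

/-- The slope of the edge direction `d` after projecting onto the plane `x ↦ (⟪w₁, x⟫, ⟪w₂, x⟫)`
(the shadow plane of the shadow-vertex method). -/
noncomputable def edgeSlope (w₁ w₂ d : E) : ℝ := ⟪w₂, d⟫ / ⟪w₁, d⟫

variable {F G : Type*} [NormedAddCommGroup F] [NormedSpace ℝ F] [MeasurableSpace F]
  [BorelSpace F] [FiniteDimensional ℝ F] [NormedAddCommGroup G] [NormedSpace ℝ G]
  [MeasurableSpace G] [BorelSpace G] [FiniteDimensional ℝ G]

theorem addHaar_setOf_inner_eq_zero (μ : Measure F) [μ.IsAddHaarMeasure] {U : F →ₗ[ℝ] E}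
    (hU : Function.Surjective U) {d : E} (hd : d ≠ 0) : μ {x | ⟪U x, d⟫ = 0} = 0 := by
  set L := (innerₛₗ ℝ d).comp U
  have hker : {x | ⟪U x, d⟫ = 0} = (LinearMap.ker L : Set F) := by
    ext x; simp [L, real_inner_comm]
  obtain ⟨x, rfl⟩ := hU d
  rw [hker]
  refine Measure.addHaar_submodule μ _ fun htop => hd ?_
  have hx : L x = 0 := LinearMap.mem_ker.1 (htop ▸ Submodule.mem_top)
  simpa [L] using hx

theorem measurable_edgeSlope (U : F →ₗ[ℝ] E) (V : G →ₗ[ℝ] E) (d : E) :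
    Measurable fun p : F × G => edgeSlope (U p.1) (V p.2) d := by
  have := U.continuous_of_finiteDimensional
  have := V.continuous_of_finiteDimensional
  unfold edgeSlope
  fun_prop

theorem addHaar_prod_setOf_edgeSlope_eq (μ : Measure F) (ν : Measure G) [μ.IsAddHaarMeasure]
    [ν.IsAddHaarMeasure] {U : F →ₗ[ℝ] E} {V : G →ₗ[ℝ] E} (hU : Function.Surjective U)
    (hV : Function.Surjective V) {d₁ d₂ : E} (hd : LinearIndependent ℝ ![d₁, d₂]) :
    μ.prod ν {p | edgeSlope (U p.1) (V p.2) d₁ = edgeSlope (U p.1) (V p.2) d₂} = 0 := by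
  rw [Measure.measure_prod_null
    (measurableSet_eq_fun (measurable_edgeSlope U V d₁) (measurable_edgeSlope U V d₂))]
  have h₁ : ∀ᵐ x ∂μ, ⟪U x, d₁⟫ ≠ 0 :=
    ae_iff.2 (by simpa using addHaar_setOf_inner_eq_zero μ hU (by simpa using hd.ne_zero 0))
  have h₂ : ∀ᵐ x ∂μ, ⟪U x, d₂⟫ ≠ 0 :=
    ae_iff.2 (by simpa using addHaar_setOf_inner_eq_zero μ hU (by simpa using hd.ne_zero 1))
  filter_upwards [h₁, h₂] with x hx₁ hx₂
  have hcomb : ⟪U x, d₂⟫ • d₁ - ⟪U x, d₁⟫ • d₂ ≠ 0 := fun h =>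
    hx₂ (LinearIndependent.pair_iff.1 hd _ _ (by rwa [neg_smul, ← sub_eq_add_neg])).1
  refine measure_mono_null (fun y hy => ?_) (addHaar_setOf_inner_eq_zero ν hV hcomb)
  have hy : ⟪V y, d₁⟫ / ⟪U x, d₁⟫ = ⟪V y, d₂⟫ / ⟪U x, d₂⟫ := hy
  rw [div_eq_div_iff hx₁ hx₂] at hy
  change ⟪V y, ⟪U x, d₂⟫ • d₁ - ⟪U x, d₁⟫ • d₂⟫ = 0
  rw [inner_sub_right, real_inner_smul_right, real_inner_smul_right]
  linear_combination hy

end EdgeSlope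

namespace IsVertex

variable {m n : ℕ} {a : Fin m → EuclideanSpace ℝ (Fin n)} {b : Fin m → ℝ}
  {x y z : EuclideanSpace ℝ (Fin n)}

theorem eq_of_forall_tight (hz : IsVertex a b z) (hx : ∀ i, ⟪a i, z⟫ = b i → ⟪a i, x⟫ = b i) :
    x = z := by
  have h : innerₛₗ ℝ (x - z) = 0 := by
    refine LinearMap.ext_on hz.2 ?_
    rintro _ ⟨i, hi, rfl⟩
    have hi : ⟪a i, z⟫ = b i := hi
    change ⟪x - z, a i⟫ = 0
    rw [inner_sub_left, real_inner_comm (a i) x, real_inner_comm (a i) z, hx i hi, hi, sub_self]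
  rw [← sub_eq_zero, ← inner_self_eq_zero (𝕜 := ℝ)]
  exact congr($h (x - z))

theorem setOf_finite (a : Fin m → EuclideanSpace ℝ (Fin n)) (b : Fin m → ℝ) :
    {z | IsVertex a b z}.Finite := by
  refine Set.Finite.of_finite_image (f := fun z => {i | ⟪a i, z⟫ = b i}) (Set.toFinite _) ?_
  intro z hz z' hz' htight
  exact hz'.eq_of_forall_tight fun i hi => (Set.ext_iff.1 htight i).2 hi

theorem eq_of_mem_openSegment (hz : IsVertex a b z) (hx : ∀ i, ⟪a i, x⟫ ≤ b i)
    (hy : ∀ i, ⟪a i, y⟫ ≤ b i) (h : z ∈ openSegment ℝ x y) : x = z := by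
  obtain ⟨s, t, hs, ht, hst, rfl⟩ := h
  refine hz.eq_of_forall_tight fun i hi => (hx i).antisymm ?_
  rw [inner_add_right, real_inner_smul_right, real_inner_smul_right] at hi
  have hsx : s * b i ≤ s * ⟪a i, x⟫ := by
    linear_combination mul_le_mul_of_nonneg_left (hy i) ht.le - hi + b i * hst
  exact le_of_mul_le_mul_left hsx hs

theorem not_sbtw (hz : IsVertex a b z) (hx : ∀ i, ⟪a i, x⟫ ≤ b i) (hy : ∀ i, ⟪a i, y⟫ ≤ b i) :
    ¬ Sbtw ℝ x z y := fun h =>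
  h.left_ne (hz.eq_of_mem_openSegment hx hy (openSegment_eq_image_lineMap ℝ x y ▸ h.mem_image_Ioo))

theorem not_collinear {z₁ z₂ z₃ : EuclideanSpace ℝ (Fin n)} (h₁ : IsVertex a b z₁)
    (h₂ : IsVertex a b z₂) (h₃ : IsVertex a b z₃) (h₁₂ : z₁ ≠ z₂) (h₁₃ : z₁ ≠ z₃)
    (h₂₃ : z₂ ≠ z₃) : ¬ Collinear ℝ {z₁, z₂, z₃} := fun h => by
  rcases h.wbtw_or_wbtw_or_wbtw with h | h | h
  · exact h₂.not_sbtw h₁.1 h₃.1 ⟨h, h₁₂.symm, h₂₃⟩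
  · exact h₃.not_sbtw h₂.1 h₁.1 ⟨h, h₂₃.symm, h₁₃.symm⟩
  · exact h₁.not_sbtw h₃.1 h₂.1 ⟨h, h₁₃, h₁₂⟩

theorem linearIndependent_sub {z₁ z₂ z₃ : EuclideanSpace ℝ (Fin n)} (h₁ : IsVertex a b z₁)
    (h₂ : IsVertex a b z₂) (h₃ : IsVertex a b z₃) (h₁₂ : z₁ ≠ z₂) (h₁₃ : z₁ ≠ z₃)
    (h₂₃ : z₂ ≠ z₃) : LinearIndependent ℝ ![z₂ - z₁, z₃ - z₂] := by
  rw [LinearIndependent.pair_iff' (sub_ne_zero.2 h₁₂.symm)]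
  intro β hβ
  refine not_collinear h₁ h₂ h₃ h₁₂ h₁₃ h₂₃ ((collinear_iff_of_mem (p₀ := z₂) (by simp)).2
    ⟨z₂ - z₁, ?_⟩)
  simp only [Set.mem_insert_iff, Set.mem_singleton_iff, forall_eq_or_imp, forall_eq, vadd_eq_add]
  exact ⟨⟨-1, by module⟩, ⟨0, by module⟩, ⟨β, by rw [hβ]; abel⟩⟩

end IsVertex

theorem stmt14_general {m n : ℕ} (a : Fin m → EuclideanSpace ℝ (Fin n)) (b : Fin m → ℝ)
    (u v : Fin n → Fin m)
    (hu : LinearIndependent ℝ (a ∘ u)) (hv : LinearIndependent ℝ (a ∘ v)) :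
    Filter.Tendsto
      (fun ε : ℝ =>
        Measure.prod (Measure.pi fun _ : Fin n => volume.restrict (Set.Ioc (0:ℝ) 1))
            (Measure.pi fun _ : Fin n => volume.restrict (Set.Ioc (0:ℝ) 1))
          {p : (Fin n → ℝ) × (Fin n → ℝ) | ∃ z₁ z₂ z₃,
            z₁ ≠ z₂ ∧ z₁ ≠ z₃ ∧ z₂ ≠ z₃ ∧
            Neighboring a b z₂ z₁ ∧ Neighboring a b z₂ z₃ ∧
            |⟪∑ k, p.2 k • a (v k), z₂ - z₁⟫ / ⟪-∑ k, p.1 k • a (u k), z₂ - z₁⟫ -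
              ⟪∑ k, p.2 k • a (v k), z₃ - z₂⟫ / ⟪-∑ k, p.1 k • a (u k), z₃ - z₂⟫| ≤ ε})
      (nhdsWithin 0 (Set.Ioi 0)) (nhds 0) := by
  set ρ := Measure.pi fun _ : Fin n => volume.restrict (Set.Ioc (0:ℝ) 1)
  have hρ : ρ.prod ρ ≪ volume :=
    (Measure.pi_restrict_absolutelyContinuous _ _).prod
      (Measure.pi_restrict_absolutelyContinuous _ _)
  set U := -Fintype.linearCombination ℝ (a ∘ u)
  set V := Fintype.linearCombination ℝ (a ∘ v)
  have hU : Function.Surjective U := fun w =>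
    (hu.fintypeLinearCombination_surjective (by simp) (-w)).imp fun _ h => by simp [U, h]
  have hV : Function.Surjective V := hv.fintypeLinearCombination_surjective (by simp)
  set T := {t : EuclideanSpace ℝ (Fin n) × EuclideanSpace ℝ (Fin n) × EuclideanSpace ℝ (Fin n) |
    IsVertex a b t.1 ∧ IsVertex a b t.2.1 ∧ IsVertex a b t.2.2 ∧
      t.1 ≠ t.2.1 ∧ t.1 ≠ t.2.2 ∧ t.2.1 ≠ t.2.2}
  have hT : T.Finite :=
    have hvert := IsVertex.setOf_finite a b
    (hvert.prod (hvert.prod hvert)).subset fun t ht => ⟨ht.1, ht.2.1, ht.2.2.1⟩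
  refine tendsto_measure_of_subset_biUnion hT.toFinset (t := fun t ε => {p | |edgeSlope (U p.1)
    (V p.2) (t.2.1 - t.1) - edgeSlope (U p.1) (V p.2) (t.2.2 - t.2.1)| ≤ ε}) ?_ ?_
  · rintro ε p ⟨z₁, z₂, z₃, h₁₂, h₁₃, h₂₃, hn₁, hn₃, hle⟩
    refine Set.mem_iUnion₂.2 ⟨(z₁, z₂, z₃),
      hT.mem_toFinset.2 ⟨hn₁.2.1, hn₁.1, hn₃.2.1, h₁₂, h₁₃, h₂₃⟩, ?_⟩
    simpa [edgeSlope, U, V, Fintype.linearCombination_apply] using hle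
  · rintro ⟨z₁, z₂, z₃⟩ ht
    obtain ⟨h₁, h₂, h₃, h₁₂, h₁₃, h₂₃⟩ := hT.mem_toFinset.1 ht
    refine tendsto_measure_setOf_abs_le _
      ((measurable_edgeSlope U V _).sub (measurable_edgeSlope U V _)) (hρ ?_)
    simp_rw [sub_eq_zero]
    exact addHaar_prod_setOf_edgeSlope_eq volume volume hU hV
      (IsVertex.linearIndependent_sub h₁ h₂ h₃ h₁₂ h₁₃ h₂₃)

/-- Let A have unit-norm rows, let P = {x : Ax ≤ b} be non-degenerate,
let u₁, …, uₙ and v₁, …, vₙ each be n linearly independent rows of A, let λ, μ be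
independent and uniform on (0,1]ⁿ, and set w₁ = −Σ λₖuₖ, w₂ = Σ μₖvₖ. For ε > 0 let
F_ε be the event that there exist pairwise distinct vertices z₁, z₂, z₃ of P with z₁
and z₃ neighbors of z₂ and |w₂ᵀ(z₂−z₁)/w₁ᵀ(z₂−z₁) − w₂ᵀ(z₃−z₂)/w₁ᵀ(z₃−z₂)| ≤ ε.
Then P[F_ε] → 0 as ε → 0⁺. -/
theorem stmt14 {m n : ℕ} (a : Fin m → EuclideanSpace ℝ (Fin n)) (b : Fin m → ℝ)
    (hnorm : ∀ i, ‖a i‖ = 1)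
    (hnondeg : ∀ z, IsVertex a b z → {i | ⟪a i, z⟫ = b i}.ncard = n)
    (u v : Fin n → Fin m)
    (hu : LinearIndependent ℝ (a ∘ u)) (hv : LinearIndependent ℝ (a ∘ v)) :
    Filter.Tendsto
      (fun ε : ℝ =>
        Measure.prod (Measure.pi fun _ : Fin n => volume.restrict (Set.Ioc (0:ℝ) 1))
            (Measure.pi fun _ : Fin n => volume.restrict (Set.Ioc (0:ℝ) 1))
          {p : (Fin n → ℝ) × (Fin n → ℝ) | ∃ z₁ z₂ z₃,
            z₁ ≠ z₂ ∧ z₁ ≠ z₃ ∧ z₂ ≠ z₃ ∧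
            Neighboring a b z₂ z₁ ∧ Neighboring a b z₂ z₃ ∧
            |⟪∑ k, p.2 k • a (v k), z₂ - z₁⟫ / ⟪-∑ k, p.1 k • a (u k), z₂ - z₁⟫ -
              ⟪∑ k, p.2 k • a (v k), z₃ - z₂⟫ / ⟪-∑ k, p.1 k • a (u k), z₃ - z₂⟫| ≤ ε})
      (nhdsWithin 0 (Set.Ioi 0)) (nhds 0) :=
  stmt14_general a b u v hu hv
end
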